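/- Let R be a commutative ring whose only idempotents are 0 and 1 (R is connected), and let A be an Azumaya algebra over R. Then the center of A equals R·1, i.e., the structure map R → Z(A) is an isomorphism. -/

import Mathlib

open TensorProduct MulOpposite

variable (R A : Type*) [CommRing R] [Ring A] [Algebra R A]

/-- Right multiplication as an algebra map from the opposite algebra to endomorphisms. -/
noncomputable def mulRightAlgHom : Aᵐᵒᵖ →ₐ[R] Module.End R A where
  toFun b := LinearMap.mulRight R b.unop
  map_one' := by ext a; simp
  map_mul' x y := by ext a; simp [mul_assoc]
  map_zero' := by ext a; simp
  map_add' x y := by ext a; simp [mul_add]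
  commutes' r := by
    ext a
    simp [Module.algebraMap_end_apply, MulOpposite.algebraMap_apply, ← Algebra.commutes,
      Algebra.smul_def]

/-- The sandwich map `A ⊗_R A^op → End_R(A)`, sending `a ⊗ b` to `x ↦ a * x * b`. -/
noncomputable def sandwichMap : A ⊗[R] Aᵐᵒᵖ →ₐ[R] Module.End R A :=
  Algebra.TensorProduct.lift (Algebra.lmul R A) (mulRightAlgHom R A)
    (fun a b => by
      show _ = _
      ext x
      simp [mulRightAlgHom, mul_assoc])

/-- `A` is an Azumaya algebra over `R` if it is a finitely generated projective faithful
`R`-module and the sandwich map `A ⊗_R A^op → End_R(A)` is bijective. -/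
def IsAzumayaAlgebra : Prop :=
  Module.Finite R A ∧ Module.Projective R A ∧ FaithfulSMul R A ∧
    Function.Bijective (sandwichMap R A)

/-!
The trace ideal `I` of a finitely generated projective faithful module `M` is all of `R`:
projectivity gives `I • M = M`, so Nakayama yields `r ≡ 1 mod I` killing `M`, and faithfulness
forces `r = 0`. Write `1 = ∑ φₖ(wₖ)` with `φₖ ∈ Hom_R(A, R)`. A central `z` makes left
multiplication by `z` commute with all of `End_R(A) = A ⊗ Aᵒᵖ`, in particular with
`x ↦ φₖ(x) • 1`, so `φₖ(wₖ) • z = φₖ(z wₖ) • 1` and `z = ∑ φₖ(z wₖ) • 1 ∈ R · 1`.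
-/

variable {R} in
theorem Ideal.eq_top_of_smul_top_eq_top {M : Type*} [AddCommGroup M] [Module R M]
    [Module.Finite R M] [FaithfulSMul R M] {I : Ideal R}
    (hI : I • (⊤ : Submodule R M) = ⊤) : I = ⊤ := by
  obtain ⟨r, hr1, hr⟩ := Submodule.exists_sub_one_mem_and_smul_eq_zero_of_fg_of_le_smul I ⊤
    Module.Finite.fg_top hI.ge
  have hr0 : r = 0 :=
    FaithfulSMul.eq_of_smul_eq_smul fun m : M => by rw [hr m trivial, zero_smul]
  rw [hr0, zero_sub] at hr1
  exact I.eq_top_of_isUnit_mem hr1 isUnit_one.neg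

namespace Module

noncomputable def traceIdeal (M : Type*) [AddCommGroup M] [Module R M] : Ideal R :=
  LinearMap.range (contractLeft R M)

variable {R} {M : Type*} [AddCommGroup M] [Module R M]

theorem dual_apply_mem_traceIdeal (φ : Dual R M) (m : M) : φ m ∈ traceIdeal R M :=
  ⟨φ ⊗ₜ m, rfl⟩

theorem traceIdeal_smul_top [Projective R M] : traceIdeal R M • (⊤ : Submodule R M) = ⊤ := by
  obtain ⟨s, hs⟩ := projective_def.mp ‹Projective R M›
  refine eq_top_iff.mpr fun m _ => ?_
  rw [← hs m, Finsupp.linearCombination_apply]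
  exact Submodule.sum_mem _ fun p _ =>
    Submodule.smul_mem_smul (dual_apply_mem_traceIdeal (Finsupp.lapply p ∘ₗ s) m) trivial

theorem traceIdeal_eq_top [Module.Finite R M] [Projective R M] [FaithfulSMul R M] :
    traceIdeal R M = ⊤ :=
  Ideal.eq_top_of_smul_top_eq_top traceIdeal_smul_top

end Module

theorem sandwichMap_tmul (a : A) (b : Aᵐᵒᵖ) :
    sandwichMap R A (a ⊗ₜ b) = Algebra.lmul R A a * LinearMap.mulRight R b.unop :=
  Algebra.TensorProduct.lift_tmul _ _ _ _ _

variable {R A}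

theorem commute_sandwichMap_lmul_of_mem_center {z : A} (hz : z ∈ Subalgebra.center R A)
    (t : A ⊗[R] Aᵐᵒᵖ) : Commute (sandwichMap R A t) (Algebra.lmul R A z) := by
  induction t using TensorProduct.induction_on with
  | zero => simp
  | tmul a b =>
    rw [sandwichMap_tmul]
    refine Commute.mul_left ?_ ?_
    · rw [Commute, SemiconjBy, ← map_mul, ← map_mul, Subalgebra.mem_center_iff.mp hz a]
    · exact LinearMap.ext fun x => mul_assoc z x b.unop
  | add s t hs ht => simpa only [map_add] using hs.add_left ht

theorem mem_bot_of_forall_commute_lmul [Module.Finite R A] [Module.Projective R A]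
    [FaithfulSMul R A] {z : A} (hz : ∀ ψ : Module.End R A, Commute ψ (Algebra.lmul R A z)) :
    z ∈ (⊥ : Subalgebra R A) := by
  have hcontract (t : Module.Dual R A ⊗[R] A) :
      contractLeft R A t • z ∈ (⊥ : Subalgebra R A) := by
    induction t using TensorProduct.induction_on with
    | zero => simp
    | tmul φ w =>
      have hcomm := LinearMap.congr_fun (hz (φ.smulRight 1)) w
      simp only [Module.End.mul_apply, LinearMap.smulRight_apply, Algebra.coe_lmul_eq_mul,
        LinearMap.mul_apply', mul_smul_comm, mul_one] at hcomm
      rw [contractLeft_apply, ← hcomm]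
      exact Subalgebra.smul_mem _ (Subalgebra.one_mem _) _
    | add s t hs ht => simpa only [map_add, add_smul] using Subalgebra.add_mem _ hs ht
  obtain ⟨t, ht⟩ : (1 : R) ∈ Module.traceIdeal R A := by
    rw [Module.traceIdeal_eq_top]; trivial
  simpa only [ht, one_smul] using hcontract t

theorem center_of_azumaya_eq_base_general
    (h : IsAzumayaAlgebra R A) :
    Function.Injective (algebraMap R A) ∧
      Subalgebra.center R A = ⊥ := by
  obtain ⟨_, _, _, -, hsurj⟩ := h
  refine ⟨FaithfulSMul.algebraMap_injective R A, le_antisymm (fun z hz => ?_) bot_le⟩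
  refine mem_bot_of_forall_commute_lmul fun ψ => ?_
  obtain ⟨t, rfl⟩ := hsurj ψ
  exact commute_sandwichMap_lmul_of_mem_center hz t

/-- Over a connected commutative ring (one whose only idempotents are `0` and `1`),
the center of an Azumaya algebra `A` is exactly `R·1`: the structure map `R → Z(A)`
is an isomorphism, i.e. it is injective and its range is the whole center. -/
theorem center_of_azumaya_eq_base
    (hconn : ∀ e : R, e * e = e → e = 0 ∨ e = 1)
    (h : IsAzumayaAlgebra R A) :
    Function.Injective (algebraMap R A) ∧
      Subalgebra.center R A = ⊥ :=
  center_of_azumaya_eq_base_general h
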